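/- Let T : X → Y be a bounded operator between Banach spaces. For all m, n ∈ ℕ, τ(T | ℋ(𝔻_{m+1}^{m+n})) ≤ τ(T | ℋ(𝔻₁ⁿ)). -/

import Mathlib

open MeasureTheory Real Set
open scoped Classical

noncomputable section

/-- The dyadic interval `Δ_k^{(j)} = [(j-1)/2^k, j/2^k)`. -/
def dyadic (k : ℕ) (j : ℤ) : Set ℝ := Set.Ico (((j : ℝ) - 1) / 2 ^ k) ((j : ℝ) / 2 ^ k)

/-- The Haar function `χ_k^{(j)}`. -/
def haar (k : ℕ) (j : ℤ) (t : ℝ) : ℝ :=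
  if t ∈ dyadic k (2 * j - 1) then (2 : ℝ) ^ (((k : ℝ) - 1) / 2)
  else if t ∈ dyadic k (2 * j) then -(2 : ℝ) ^ (((k : ℝ) - 1) / 2)
  else 0

/-- Membership in the dyadic tree `𝔻`. -/
def memD (kj : ℕ × ℤ) : Prop := 1 ≤ kj.1 ∧ 1 ≤ kj.2 ∧ kj.2 ≤ 2 ^ (kj.1 - 1)

/-- The finite dyadic tree `𝔻_m^n`. -/
def Dtree (m n : ℕ) : Finset (ℕ × ℤ) :=
  (Finset.Icc m n).biUnion fun k => (Finset.Icc (1 : ℤ) (2 ^ (k - 1))).image fun j => (k, j)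

/-- Number of indices of `F` lying on the branch through `t`. -/
def branchCount (F : Finset (ℕ × ℤ)) (t : ℝ) : ℕ :=
  (F.filter fun kj => t ∈ dyadic (kj.1 - 1) kj.2).card

/-- The local height of a finite index set. -/
def lh (F : Finset (ℕ × ℤ)) : ℕ :=
  sSup {m | ∃ t ∈ Set.Ico (0 : ℝ) 1, branchCount F t = m}

/-- The transformation `φ_h^{(i)}` interchanging `Δ_{h+1}^{(4i-2)}` and `Δ_{h+1}^{(4i-1)}`. -/
def phi (h : ℕ) (i : ℤ) (t : ℝ) : ℝ :=
  if t ∈ dyadic (h + 1) (4 * i - 2) then t + 1 / 2 ^ (h + 1)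
  else if t ∈ dyadic (h + 1) (4 * i - 1) then t - 1 / 2 ^ (h + 1)
  else t

/-- The Haar type ideal norm `τ(T | ℋ(F))`. -/
def tau {X Y : Type*} [NormedAddCommGroup X] [NormedSpace ℝ X]
    [NormedAddCommGroup Y] [NormedSpace ℝ Y]
    (T : X →L[ℝ] Y) (F : Finset (ℕ × ℤ)) : ℝ :=
  sInf {c : ℝ | 0 ≤ c ∧ ∀ x : ℕ × ℤ → X,
    Real.sqrt (∫ t in Set.Ico (0 : ℝ) 1, ‖∑ kj ∈ F, haar kj.1 kj.2 t • T (x kj)‖ ^ 2)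
      ≤ c * Real.sqrt (∑ kj ∈ F, ‖x kj‖ ^ 2)}

end

section Helpers

open MeasureTheory

lemma mem_dyadic_iff {t : ℝ} {k : ℕ} {i : ℤ} :
    t ∈ dyadic k i ↔ ((i : ℝ) - 1) / 2 ^ k ≤ t ∧ t < (i : ℝ) / 2 ^ k := Iff.rfl

lemma two_mul_mem_dyadic {t : ℝ} {k : ℕ} {i : ℤ} :
    2 * t ∈ dyadic k i ↔ t ∈ dyadic (k + 1) i := by
  have h : (0 : ℝ) < 2 ^ k := by positivity
  have e1 : ((i : ℝ) - 1) / 2 ^ (k + 1) = ((i : ℝ) - 1) / 2 ^ k / 2 := by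
    rw [pow_succ]; ring
  have e2 : (i : ℝ) / 2 ^ (k + 1) = (i : ℝ) / 2 ^ k / 2 := by
    rw [pow_succ]; ring
  simp only [dyadic, Set.mem_Ico, e1, e2, div_le_iff₀ (two_pos (α := ℝ)),
    lt_div_iff₀ (two_pos (α := ℝ))]
  constructor <;> rintro ⟨h1, h2⟩ <;> exact ⟨by linarith, by linarith⟩

lemma mem_dyadic_add_pow {t : ℝ} {k : ℕ} {i : ℤ} :
    t - 1 / 2 ∈ dyadic (k + 1) i ↔ t ∈ dyadic (k + 1) (i + 2 ^ k) := by
  have e1 : (((i + 2 ^ k : ℤ) : ℝ) - 1) / 2 ^ (k + 1) = ((i : ℝ) - 1) / 2 ^ (k + 1) + 1 / 2 := by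
    push_cast
    rw [pow_succ]
    field_simp
    ring
  have e2 : (((i + 2 ^ k : ℤ)) : ℝ) / 2 ^ (k + 1) = (i : ℝ) / 2 ^ (k + 1) + 1 / 2 := by
    push_cast
    rw [pow_succ]
    field_simp
  simp only [dyadic, Set.mem_Ico, e1, e2]
  constructor <;> rintro ⟨h1, h2⟩ <;> exact ⟨by linarith, by linarith⟩

end Helpers
section Helpers2
open MeasureTheory

lemma two_mul_sub_one_mem_dyadic' {t : ℝ} {k : ℕ} {i : ℤ} :
    2 * t - 1 ∈ dyadic k i ↔ t ∈ dyadic (k + 1) (i + 2 ^ k) := by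
  have e : 2 * t - 1 = 2 * (t - 1 / 2) := by ring
  rw [e, two_mul_mem_dyadic, mem_dyadic_add_pow]

lemma sqrt_two_mul_rpow (k : ℕ) :
    (2 : ℝ) ^ ((((k + 1 : ℕ) : ℝ) - 1) / 2) = Real.sqrt 2 * (2 : ℝ) ^ (((k : ℝ) - 1) / 2) := by
  rw [Real.sqrt_eq_rpow, ← Real.rpow_add (by norm_num : (0:ℝ) < 2)]
  congr 1
  push_cast
  ring

lemma haar_succ_left (k : ℕ) (j : ℤ) (t : ℝ) :
    haar (k + 1) j t = Real.sqrt 2 * haar k j (2 * t) := by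
  unfold haar
  simp only [two_mul_mem_dyadic]
  split_ifs with h1 h2
  · exact sqrt_two_mul_rpow k
  · rw [mul_neg, sqrt_two_mul_rpow k]
  · rw [mul_zero]

lemma haar_succ_right (k : ℕ) (hk : 1 ≤ k) (j : ℤ) (t : ℝ) :
    haar (k + 1) (j + 2 ^ (k - 1)) t = Real.sqrt 2 * haar k j (2 * t - 1) := by
  have h2k : (2 : ℤ) * 2 ^ (k - 1) = 2 ^ k := by
    rw [← pow_succ']
    congr 1
    omega
  have e1 : 2 * (j + 2 ^ (k - 1)) - 1 = (2 * j - 1) + 2 ^ k := by rw [← h2k]; ring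
  have e2 : 2 * (j + 2 ^ (k - 1)) = 2 * j + 2 ^ k := by rw [← h2k]; ring
  unfold haar
  rw [e1, e2]
  simp only [← two_mul_sub_one_mem_dyadic']
  split_ifs with h1 h2
  · exact sqrt_two_mul_rpow k
  · rw [mul_neg, sqrt_two_mul_rpow k]
  · rw [mul_zero]

lemma haar_eq_zero_of_neg {k : ℕ} {j : ℤ} (hj : 1 ≤ j) {t : ℝ} (ht : t < 0) :
    haar k j t = 0 := by
  have h : (0 : ℝ) < 2 ^ k := by positivity
  have hj' : (1 : ℝ) ≤ (j : ℝ) := by exact_mod_cast hj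
  unfold haar
  rw [if_neg, if_neg]
  · rintro ⟨h1, h2⟩
    have h0 : (0 : ℝ) ≤ ((2 * j : ℤ) : ℝ) - 1 := by push_cast; linarith
    have := div_nonneg h0 h.le
    linarith
  · rintro ⟨h1, h2⟩
    have h0 : (0 : ℝ) ≤ ((2 * j - 1 : ℤ) : ℝ) - 1 := by push_cast; linarith
    have := div_nonneg h0 h.le
    linarith

lemma haar_eq_zero_of_one_le {k : ℕ} {j : ℤ} (hk : 1 ≤ k) (hj : j ≤ 2 ^ (k - 1)) {t : ℝ}
    (ht : 1 ≤ t) : haar k j t = 0 := by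
  have h : (0 : ℝ) < 2 ^ k := by positivity
  have h2k : (2 : ℤ) * 2 ^ (k - 1) = 2 ^ k := by
    rw [← pow_succ']; congr 1; omega
  have hj' : (2 * (j:ℝ) : ℝ) ≤ 2 ^ k := by
    have : (2 * j : ℤ) ≤ 2 ^ k := by rw [← h2k]; linarith
    exact_mod_cast this
  unfold haar
  rw [if_neg, if_neg]
  · rintro ⟨h1, h2⟩
    have : ((2 * j : ℤ) : ℝ) / 2 ^ k ≤ 1 := by
      rw [div_le_one h]; push_cast; linarith
    linarith
  · rintro ⟨h1, h2⟩
    have : ((2 * j - 1 : ℤ) : ℝ) / 2 ^ k ≤ 1 := by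
      rw [div_le_one h]; push_cast; linarith
    linarith

end Helpers2
section Helpers3
open MeasureTheory

variable {Y : Type*} [NormedAddCommGroup Y] [NormedSpace ℝ Y]

lemma dyadic_disjoint {k : ℕ} {j : ℤ} {t : ℝ} (h : t ∈ dyadic k (2 * j - 1)) :
    t ∉ dyadic k (2 * j) := by
  simp only [dyadic, Set.mem_Ico] at h ⊢
  rintro ⟨h1, h2⟩
  have e : ((2 * j - 1 : ℤ) : ℝ) = ((2 * j : ℤ) : ℝ) - 1 := by push_cast; ring
  rw [e] at h
  linarith [h.2, h1]

lemma haar_smul_integrable (k : ℕ) (j : ℤ) (y : Y) :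
    Integrable (fun t => haar k j t • y) volume := by
  have hrep : (fun t => haar k j t • y) = fun t =>
      (dyadic k (2 * j - 1)).indicator (fun _ => ((2 : ℝ) ^ (((k : ℝ) - 1) / 2)) • y) t +
      (dyadic k (2 * j)).indicator (fun _ => (-(2 : ℝ) ^ (((k : ℝ) - 1) / 2)) • y) t := by
    funext t
    simp only [haar, Set.indicator]
    split_ifs with h1 h2 h3
    · exact absurd h2 (dyadic_disjoint h1)
    · rw [add_zero]
    · rw [zero_add]
    · rw [zero_smul, add_zero]
  rw [hrep]
  have hfin : ∀ i : ℤ, volume (dyadic k i) < ⊤ := by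
    intro i
    rw [dyadic, Real.volume_Ico]
    exact ENNReal.ofReal_lt_top
  exact ((integrable_indicator_iff measurableSet_Ico).2
      (integrableOn_const (hfin _).ne enorm_ne_top)).add
    ((integrable_indicator_iff measurableSet_Ico).2
      (integrableOn_const (hfin _).ne enorm_ne_top))

lemma haarSum_integrable (F : Finset (ℕ × ℤ)) (y : ℕ × ℤ → Y) :
    Integrable (fun t => ∑ kj ∈ F, haar kj.1 kj.2 t • y kj) volume := by
  refine integrable_finset_sum F fun kj _ => haar_smul_integrable kj.1 kj.2 (y kj)

lemma abs_haar_le (k : ℕ) (j : ℤ) (t : ℝ) :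
    |haar k j t| ≤ (2 : ℝ) ^ (((k : ℝ) - 1) / 2) := by
  have h0 : (0:ℝ) ≤ (2 : ℝ) ^ (((k : ℝ) - 1) / 2) := Real.rpow_nonneg (by norm_num) _
  unfold haar
  split_ifs
  · rw [abs_of_nonneg h0]
  · rw [abs_neg, abs_of_nonneg h0]
  · rw [abs_zero]; exact h0

lemma norm_haarSum_le (F : Finset (ℕ × ℤ)) (y : ℕ × ℤ → Y) (t : ℝ) :
    ‖∑ kj ∈ F, haar kj.1 kj.2 t • y kj‖ ≤
      ∑ kj ∈ F, (2 : ℝ) ^ (((kj.1 : ℝ) - 1) / 2) * ‖y kj‖ := by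
  refine (norm_sum_le _ _).trans (Finset.sum_le_sum fun kj _ => ?_)
  rw [norm_smul, Real.norm_eq_abs]
  exact mul_le_mul_of_nonneg_right (abs_haar_le _ _ _) (norm_nonneg _)

lemma haarSum_sq_integrable (F : Finset (ℕ × ℤ)) (y : ℕ × ℤ → Y) :
    Integrable (fun t => ‖∑ kj ∈ F, haar kj.1 kj.2 t • y kj‖ ^ 2) volume := by
  set M : ℝ := ∑ kj ∈ F, (2 : ℝ) ^ (((kj.1 : ℝ) - 1) / 2) * ‖y kj‖ with hM
  have hG := haarSum_integrable F y
  refine (hG.norm.const_mul M).mono' ?_ (Filter.Eventually.of_forall fun t => ?_)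
  · have := hG.aestronglyMeasurable.norm
    have h2 : AEStronglyMeasurable
        (fun t => ‖∑ kj ∈ F, haar kj.1 kj.2 t • y kj‖ * ‖∑ kj ∈ F, haar kj.1 kj.2 t • y kj‖)
        volume := this.mul this
    simpa [pow_two] using h2
  · have h1 : ‖∑ kj ∈ F, haar kj.1 kj.2 t • y kj‖ ≤ M := norm_haarSum_le F y t
    have h2 : (0:ℝ) ≤ ‖∑ kj ∈ F, haar kj.1 kj.2 t • y kj‖ := norm_nonneg _
    rw [Real.norm_eq_abs, abs_of_nonneg (by positivity), pow_two]
    exact mul_le_mul_of_nonneg_right h1 h2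

end Helpers3
section Helpers4

lemma mem_Dtree {a b : ℕ} {kj : ℕ × ℤ} :
    kj ∈ Dtree a b ↔ a ≤ kj.1 ∧ kj.1 ≤ b ∧ 1 ≤ kj.2 ∧ kj.2 ≤ 2 ^ (kj.1 - 1) := by
  obtain ⟨k, j⟩ := kj
  simp only [Dtree, Finset.mem_biUnion, Finset.mem_image, Finset.mem_Icc, Prod.mk.injEq]
  constructor
  · rintro ⟨k', ⟨hk1, hk2⟩, j', ⟨hj1, hj2⟩, rfl, rfl⟩
    exact ⟨hk1, hk2, hj1, hj2⟩
  · rintro ⟨h1, h2, h3, h4⟩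
    exact ⟨k, ⟨h1, h2⟩, j, ⟨h3, h4⟩, rfl, rfl⟩

lemma two_pow_pos' (n : ℕ) : (0 : ℤ) < 2 ^ n := by positivity

lemma Dtree_succ (a b : ℕ) (ha : 1 ≤ a) :
    Dtree (a + 1) (b + 1) = ((Dtree a b).image fun kj => (kj.1 + 1, kj.2)) ∪
      ((Dtree a b).image fun kj => (kj.1 + 1, kj.2 + 2 ^ (kj.1 - 1))) := by
  ext ⟨k, j⟩
  rw [Finset.mem_union, Finset.mem_image, Finset.mem_image, mem_Dtree]
  constructor
  · rintro ⟨h1, h2, h3, h4⟩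
    obtain ⟨k', rfl⟩ : ∃ k', k = k' + 1 := ⟨k - 1, by omega⟩
    have hk' : 1 ≤ k' := by omega
    rw [show k' + 1 - 1 = k' from rfl] at h4
    have hpow : (2 : ℤ) ^ k' = 2 * 2 ^ (k' - 1) := by
      rw [← pow_succ']; congr 1; omega
    by_cases hj : j ≤ 2 ^ (k' - 1)
    · refine Or.inl ⟨(k', j), mem_Dtree.2 ?_, rfl⟩
      exact ⟨by omega, by omega, h3, hj⟩
    · push_neg at hj
      refine Or.inr ⟨(k', j - 2 ^ (k' - 1)), mem_Dtree.2 ?_, ?_⟩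
      · refine ⟨by omega, by omega, ?_, ?_⟩ <;> simp only <;>
          [linarith; linarith [h4, hpow]]
      · show (k' + 1, j - 2 ^ (k' - 1) + 2 ^ (k' - 1)) = (k' + 1, j)
        rw [sub_add_cancel]
  · rintro (⟨⟨k', j'⟩, hm, heq⟩ | ⟨⟨k', j'⟩, hm, heq⟩) <;>
      obtain ⟨h1, h2, h3, h4⟩ := mem_Dtree.1 hm <;>
      simp only at h1 h2 h3 h4 <;>
      obtain ⟨rfl, rfl⟩ := Prod.mk.injEq .. ▸ heq <;>
      [skip; skip] <;>
      have hpow : (2 : ℤ) ^ k' = 2 * 2 ^ (k' - 1) := by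
        rw [← pow_succ']; congr 1; omega
    · have hp1 : (0 : ℤ) < 2 ^ (k' - 1) := two_pow_pos' _
      refine ⟨by omega, by omega, ?_, ?_⟩ <;>
        simp only [show k' + 1 - 1 = k' from rfl] <;> linarith
    · have hp1 : (0 : ℤ) < 2 ^ (k' - 1) := two_pow_pos' _
      refine ⟨by omega, by omega, ?_, ?_⟩ <;>
        simp only [show k' + 1 - 1 = k' from rfl] <;> linarith

lemma sum_Dtree_succ {M : Type*} [AddCommMonoid M] (a b : ℕ) (ha : 1 ≤ a) (f : ℕ × ℤ → M) :
    ∑ kj ∈ Dtree (a + 1) (b + 1), f kj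
      = ∑ kj ∈ Dtree a b, f (kj.1 + 1, kj.2)
        + ∑ kj ∈ Dtree a b, f (kj.1 + 1, kj.2 + 2 ^ (kj.1 - 1)) := by
  rw [Dtree_succ a b ha, Finset.sum_union, Finset.sum_image, Finset.sum_image]
  · rintro ⟨k, j⟩ hk ⟨k', j'⟩ hk' h
    simp only [Prod.mk.injEq] at h
    obtain ⟨hke, hje⟩ := h
    have hk2 : k = k' := by omega
    subst hk2
    have : j = j' := by linarith
    rw [this]
  · rintro ⟨k, j⟩ hk ⟨k', j'⟩ hk' h
    simp only [Prod.mk.injEq] at h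
    have hk2 : k = k' := by omega
    subst hk2
    rw [h.2]
  · rw [Finset.disjoint_left]
    rintro ⟨k, j⟩ h1 h2
    simp only [Finset.mem_image, Prod.mk.injEq] at h1 h2
    obtain ⟨⟨k1, j1⟩, hm1, hke1, hje1⟩ := h1
    obtain ⟨⟨k2, j2⟩, hm2, hke2, hje2⟩ := h2
    obtain ⟨_, _, hj1, hj1'⟩ := mem_Dtree.1 hm1
    obtain ⟨_, _, hj2, hj2'⟩ := mem_Dtree.1 hm2
    simp only at hke1 hje1 hke2 hje2 hj1 hj1' hj2 hj2'
    have hk : k1 = k2 := by omega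
    subst hk
    have hp1 : (0 : ℤ) < 2 ^ (k1 - 1) := two_pow_pos' _
    rw [← hje1] at hje2
    linarith [hj1', hj2]

end Helpers4
section Main
open MeasureTheory

variable {X Y : Type*} [NormedAddCommGroup X] [NormedSpace ℝ X]
  [NormedAddCommGroup Y] [NormedSpace ℝ Y]

lemma cauchy_schwarz_sum (F : Finset (ℕ × ℤ)) (f g : ℕ × ℤ → ℝ) (hf : ∀ kj, 0 ≤ f kj)
    (hg : ∀ kj, 0 ≤ g kj) :
    ∑ kj ∈ F, f kj * g kj ≤
      Real.sqrt (∑ kj ∈ F, f kj ^ 2) * Real.sqrt (∑ kj ∈ F, g kj ^ 2) := by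
  have h := Finset.sum_mul_sq_le_sq_mul_sq F f g
  have h2 := Real.sqrt_le_sqrt h
  rw [Real.sqrt_sq (Finset.sum_nonneg fun kj _ => mul_nonneg (hf kj) (hg kj)),
    Real.sqrt_mul (Finset.sum_nonneg fun kj _ => sq_nonneg _)] at h2
  exact h2

lemma tau_set_nonempty (T : X →L[ℝ] Y) (F : Finset (ℕ × ℤ)) :
    ∃ c : ℝ, 0 ≤ c ∧ ∀ x : ℕ × ℤ → X,
      Real.sqrt (∫ t in Set.Ico (0 : ℝ) 1, ‖∑ kj ∈ F, haar kj.1 kj.2 t • T (x kj)‖ ^ 2)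
        ≤ c * Real.sqrt (∑ kj ∈ F, ‖x kj‖ ^ 2) := by
  set c : ℝ := Real.sqrt (∑ kj ∈ F, ((2 : ℝ) ^ (((kj.1 : ℝ) - 1) / 2) * ‖T‖) ^ 2) with hc
  refine ⟨c, Real.sqrt_nonneg _, fun x => ?_⟩
  set S : ℝ := Real.sqrt (∑ kj ∈ F, ‖x kj‖ ^ 2) with hS
  have hS0 : 0 ≤ S := Real.sqrt_nonneg _
  have hc0 : 0 ≤ c := Real.sqrt_nonneg _
  have hbd : ∀ t : ℝ, ‖∑ kj ∈ F, haar kj.1 kj.2 t • T (x kj)‖ ≤ c * S := by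
    intro t
    refine (norm_haarSum_le F (fun kj => T (x kj)) t).trans ?_
    have h1 : ∑ kj ∈ F, (2 : ℝ) ^ (((kj.1 : ℝ) - 1) / 2) * ‖T (x kj)‖ ≤
        ∑ kj ∈ F, ((2 : ℝ) ^ (((kj.1 : ℝ) - 1) / 2) * ‖T‖) * ‖x kj‖ := by
      refine Finset.sum_le_sum fun kj _ => ?_
      rw [mul_assoc]
      exact mul_le_mul_of_nonneg_left (T.le_opNorm _) (Real.rpow_nonneg (by norm_num) _)
    refine h1.trans ?_
    exact cauchy_schwarz_sum F _ _
      (fun kj => mul_nonneg (Real.rpow_nonneg (by norm_num) _) (norm_nonneg _))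
      (fun kj => norm_nonneg _)
  have hint : IntegrableOn (fun t => ‖∑ kj ∈ F, haar kj.1 kj.2 t • T (x kj)‖ ^ 2)
      (Set.Ico (0 : ℝ) 1) volume :=
    (haarSum_sq_integrable F fun kj => T (x kj)).integrableOn
  have hle : ∫ t in Set.Ico (0 : ℝ) 1, ‖∑ kj ∈ F, haar kj.1 kj.2 t • T (x kj)‖ ^ 2
      ≤ ∫ _ in Set.Ico (0 : ℝ) 1, (c * S) ^ 2 := by
    refine setIntegral_mono_on hint (integrableOn_const ?_ enorm_ne_top) measurableSet_Ico
      fun t _ => ?_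
    · rw [Real.volume_Ico]; exact ENNReal.ofReal_ne_top
    · exact pow_le_pow_left₀ (norm_nonneg _) (hbd t) 2
  have hconst : ∫ _ in Set.Ico (0 : ℝ) 1, (c * S) ^ 2 = (c * S) ^ 2 := by
    rw [setIntegral_const, measureReal_def, Real.volume_Ico]
    norm_num
  calc Real.sqrt (∫ t in Set.Ico (0 : ℝ) 1, ‖∑ kj ∈ F, haar kj.1 kj.2 t • T (x kj)‖ ^ 2)
      ≤ Real.sqrt ((c * S) ^ 2) := Real.sqrt_le_sqrt (hconst ▸ hle)
    _ = c * S := Real.sqrt_sq (mul_nonneg hc0 hS0)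

end Main
section Main2
open MeasureTheory

variable {X Y : Type*} [NormedAddCommGroup X] [NormedSpace ℝ X]
  [NormedAddCommGroup Y] [NormedSpace ℝ Y]

lemma sqrt_le_mul_sqrt_iff {A S c : ℝ} (hA : 0 ≤ A) (hS : 0 ≤ S) (h : Real.sqrt A ≤ c * Real.sqrt S) :
    A ≤ c ^ 2 * S := by
  have h2 := mul_le_mul h h (Real.sqrt_nonneg A) (le_trans (Real.sqrt_nonneg A) h)
  rwa [Real.mul_self_sqrt hA, mul_mul_mul_comm, Real.mul_self_sqrt hS, ← pow_two] at h2

lemma tau_mem_step (T : X →L[ℝ] Y) (a b : ℕ) (ha : 1 ≤ a) (c : ℝ) (hc0 : 0 ≤ c)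
    (hc : ∀ x : ℕ × ℤ → X,
      Real.sqrt (∫ t in Set.Ico (0 : ℝ) 1, ‖∑ kj ∈ Dtree a b, haar kj.1 kj.2 t • T (x kj)‖ ^ 2)
        ≤ c * Real.sqrt (∑ kj ∈ Dtree a b, ‖x kj‖ ^ 2))
    (x : ℕ × ℤ → X) :
    Real.sqrt (∫ t in Set.Ico (0 : ℝ) 1,
        ‖∑ kj ∈ Dtree (a + 1) (b + 1), haar kj.1 kj.2 t • T (x kj)‖ ^ 2)
      ≤ c * Real.sqrt (∑ kj ∈ Dtree (a + 1) (b + 1), ‖x kj‖ ^ 2) := by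
  set xL : ℕ × ℤ → X := fun kj => x (kj.1 + 1, kj.2) with hxL
  set xR : ℕ × ℤ → X := fun kj => x (kj.1 + 1, kj.2 + 2 ^ (kj.1 - 1)) with hxR
  set G : ℝ → Y := fun t => ∑ kj ∈ Dtree (a + 1) (b + 1), haar kj.1 kj.2 t • T (x kj) with hG
  set gL : ℝ → Y := fun s => ∑ kj ∈ Dtree a b, haar kj.1 kj.2 s • T (xL kj) with hgL
  set gR : ℝ → Y := fun s => ∑ kj ∈ Dtree a b, haar kj.1 kj.2 s • T (xR kj) with hgR
  -- decomposition
  have hdec : ∀ t : ℝ, G t = Real.sqrt 2 • gL (2 * t) + Real.sqrt 2 • gR (2 * t - 1) := by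
    intro t
    simp only [hG, hgL, hgR]
    rw [sum_Dtree_succ a b ha (fun kj => haar kj.1 kj.2 t • T (x kj))]
    congr 1
    · rw [Finset.smul_sum]
      refine Finset.sum_congr rfl fun kj hkj => ?_
      rw [haar_succ_left kj.1 kj.2 t, smul_smul]
    · rw [Finset.smul_sum]
      refine Finset.sum_congr rfl fun kj hkj => ?_
      have hk1 : 1 ≤ kj.1 := le_trans ha (mem_Dtree.1 hkj).1
      rw [haar_succ_right kj.1 hk1 kj.2 t, smul_smul]
  have hnormsq : ∀ v : Y, ‖Real.sqrt 2 • v‖ ^ 2 = 2 * ‖v‖ ^ 2 := by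
    intro v
    rw [norm_smul, mul_pow, Real.norm_eq_abs, abs_of_nonneg (Real.sqrt_nonneg _),
      Real.sq_sqrt (by norm_num : (0:ℝ) ≤ 2)]
  have hsq : ∀ t : ℝ, ‖G t‖ ^ 2 = 2 * ‖gL (2 * t)‖ ^ 2 + 2 * ‖gR (2 * t - 1)‖ ^ 2 := by
    intro t
    rcases lt_or_ge t (1 / 2) with h | h
    · have hR0 : gR (2 * t - 1) = 0 := by
        refine Finset.sum_eq_zero fun kj hkj => ?_
        rw [haar_eq_zero_of_neg (mem_Dtree.1 hkj).2.2.1 (by linarith), zero_smul]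
      rw [hdec t, hR0, smul_zero, add_zero, hnormsq, norm_zero]
      ring
    · have hL0 : gL (2 * t) = 0 := by
        refine Finset.sum_eq_zero fun kj hkj => ?_
        obtain ⟨h1, h2, h3, h4⟩ := mem_Dtree.1 hkj
        rw [haar_eq_zero_of_one_le (le_trans ha h1) h4 (by linarith), zero_smul]
      rw [hdec t, hL0, smul_zero, zero_add, hnormsq, norm_zero]
      ring
  -- integrability
  have hIL : Integrable (fun s => ‖gL s‖ ^ 2) volume := haarSum_sq_integrable _ _
  have hIR : Integrable (fun s => ‖gR s‖ ^ 2) volume := haarSum_sq_integrable _ _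
  have hIL2 : Integrable (fun t => ‖gL (2 * t)‖ ^ 2) volume :=
    hIL.comp_mul_left' two_ne_zero
  have hIR2 : Integrable (fun t => ‖gR (2 * t - 1)‖ ^ 2) volume := by
    have h1 : Integrable (fun s => ‖gR (s - 1)‖ ^ 2) volume := hIR.comp_sub_right 1
    exact h1.comp_mul_left' two_ne_zero
  -- vanishing outside [0,1)
  have hvanish : ∀ (y : ℕ × ℤ → X), ∀ t ∉ Set.Ico (0 : ℝ) 1,
      ‖∑ kj ∈ Dtree a b, haar kj.1 kj.2 t • T (y kj)‖ ^ 2 = 0 := by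
    intro y t ht
    have h0 : (∑ kj ∈ Dtree a b, haar kj.1 kj.2 t • T (y kj)) = 0 := by
      refine Finset.sum_eq_zero fun kj hkj => ?_
      obtain ⟨h1, h2, h3, h4⟩ := mem_Dtree.1 hkj
      simp only [Set.mem_Ico, not_and, not_lt] at ht
      rcases lt_or_ge t 0 with h | h
      · rw [haar_eq_zero_of_neg h3 h, zero_smul]
      · rw [haar_eq_zero_of_one_le (le_trans ha h1) h4 (ht h), zero_smul]
    rw [h0, norm_zero]
    ring
  have hvanishG : ∀ t ∉ Set.Ico (0 : ℝ) 1, ‖G t‖ ^ 2 = 0 := by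
    intro t ht
    have h0 : G t = 0 := by
      refine Finset.sum_eq_zero fun kj hkj => ?_
      obtain ⟨h1, h2, h3, h4⟩ := mem_Dtree.1 hkj
      simp only [Set.mem_Ico, not_and, not_lt] at ht
      rcases lt_or_ge t 0 with h | h
      · rw [haar_eq_zero_of_neg h3 h, zero_smul]
      · rw [haar_eq_zero_of_one_le (by omega) h4 (ht h), zero_smul]
    rw [h0, norm_zero]
    ring
  -- integral computation
  have hcalc : ∫ t in Set.Ico (0 : ℝ) 1, ‖G t‖ ^ 2
      = (∫ s in Set.Ico (0 : ℝ) 1, ‖gL s‖ ^ 2) + ∫ s in Set.Ico (0 : ℝ) 1, ‖gR s‖ ^ 2 := by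
    have e0 : ∫ t in Set.Ico (0 : ℝ) 1, ‖G t‖ ^ 2 = ∫ t : ℝ, ‖G t‖ ^ 2 :=
      setIntegral_eq_integral_of_forall_compl_eq_zero hvanishG
    have e1 : ∫ t : ℝ, ‖G t‖ ^ 2
        = ∫ t : ℝ, (2 * ‖gL (2 * t)‖ ^ 2 + 2 * ‖gR (2 * t - 1)‖ ^ 2) := by
      exact integral_congr_ae (Filter.Eventually.of_forall hsq)
    have e2 : ∫ t : ℝ, (2 * ‖gL (2 * t)‖ ^ 2 + 2 * ‖gR (2 * t - 1)‖ ^ 2)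
        = 2 * (∫ t : ℝ, ‖gL (2 * t)‖ ^ 2) + 2 * ∫ t : ℝ, ‖gR (2 * t - 1)‖ ^ 2 := by
      rw [integral_add (hIL2.const_mul 2) (hIR2.const_mul 2), integral_const_mul,
        integral_const_mul]
    have e3 : ∫ t : ℝ, ‖gL (2 * t)‖ ^ 2 = (2 : ℝ)⁻¹ * ∫ s : ℝ, ‖gL s‖ ^ 2 := by
      rw [Measure.integral_comp_mul_left (fun s => ‖gL s‖ ^ 2) 2]
      rw [smul_eq_mul, abs_of_nonneg (by norm_num : (0:ℝ) ≤ 2⁻¹)]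
    have e4 : ∫ t : ℝ, ‖gR (2 * t - 1)‖ ^ 2 = (2 : ℝ)⁻¹ * ∫ s : ℝ, ‖gR s‖ ^ 2 := by
      have : (fun t : ℝ => ‖gR (2 * t - 1)‖ ^ 2)
          = fun t : ℝ => (fun s : ℝ => ‖gR (s - 1)‖ ^ 2) (2 * t) := rfl
      rw [this, Measure.integral_comp_mul_left (fun s : ℝ => ‖gR (s - 1)‖ ^ 2) 2,
        integral_sub_right_eq_self (fun s : ℝ => ‖gR s‖ ^ 2) 1, smul_eq_mul,
        abs_of_nonneg (by norm_num : (0:ℝ) ≤ 2⁻¹)]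
    have e5 : ∫ s : ℝ, ‖gL s‖ ^ 2 = ∫ s in Set.Ico (0 : ℝ) 1, ‖gL s‖ ^ 2 :=
      (setIntegral_eq_integral_of_forall_compl_eq_zero (hvanish xL)).symm
    have e6 : ∫ s : ℝ, ‖gR s‖ ^ 2 = ∫ s in Set.Ico (0 : ℝ) 1, ‖gR s‖ ^ 2 :=
      (setIntegral_eq_integral_of_forall_compl_eq_zero (hvanish xR)).symm
    rw [e0, e1, e2, e3, e4, ← e5, ← e6]
    ring
  -- bounds from hypothesis
  have hL := hc xL
  have hR := hc xR
  have hLsq : ∫ s in Set.Ico (0 : ℝ) 1, ‖gL s‖ ^ 2 ≤ c ^ 2 * ∑ kj ∈ Dtree a b, ‖xL kj‖ ^ 2 :=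
    sqrt_le_mul_sqrt_iff (integral_nonneg fun t => sq_nonneg _)
      (Finset.sum_nonneg fun kj _ => sq_nonneg _) hL
  have hRsq : ∫ s in Set.Ico (0 : ℝ) 1, ‖gR s‖ ^ 2 ≤ c ^ 2 * ∑ kj ∈ Dtree a b, ‖xR kj‖ ^ 2 :=
    sqrt_le_mul_sqrt_iff (integral_nonneg fun t => sq_nonneg _)
      (Finset.sum_nonneg fun kj _ => sq_nonneg _) hR
  have hsum : (∑ kj ∈ Dtree a b, ‖xL kj‖ ^ 2) + ∑ kj ∈ Dtree a b, ‖xR kj‖ ^ 2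
      = ∑ kj ∈ Dtree (a + 1) (b + 1), ‖x kj‖ ^ 2 :=
    (sum_Dtree_succ a b ha fun kj => ‖x kj‖ ^ 2).symm
  have htot : ∫ t in Set.Ico (0 : ℝ) 1, ‖G t‖ ^ 2
      ≤ c ^ 2 * ∑ kj ∈ Dtree (a + 1) (b + 1), ‖x kj‖ ^ 2 := by
    rw [hcalc, ← hsum]
    calc (∫ s in Set.Ico (0 : ℝ) 1, ‖gL s‖ ^ 2) + ∫ s in Set.Ico (0 : ℝ) 1, ‖gR s‖ ^ 2
        ≤ c ^ 2 * (∑ kj ∈ Dtree a b, ‖xL kj‖ ^ 2) + c ^ 2 * ∑ kj ∈ Dtree a b, ‖xR kj‖ ^ 2 :=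
          add_le_add hLsq hRsq
      _ = c ^ 2 * ((∑ kj ∈ Dtree a b, ‖xL kj‖ ^ 2) + ∑ kj ∈ Dtree a b, ‖xR kj‖ ^ 2) := by ring
  calc Real.sqrt (∫ t in Set.Ico (0 : ℝ) 1, ‖G t‖ ^ 2)
      ≤ Real.sqrt (c ^ 2 * ∑ kj ∈ Dtree (a + 1) (b + 1), ‖x kj‖ ^ 2) := Real.sqrt_le_sqrt htot
    _ = c * Real.sqrt (∑ kj ∈ Dtree (a + 1) (b + 1), ‖x kj‖ ^ 2) := by
        rw [Real.sqrt_mul (sq_nonneg c), Real.sqrt_sq hc0]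

lemma tau_step (T : X →L[ℝ] Y) (a b : ℕ) (ha : 1 ≤ a) :
    tau T (Dtree (a + 1) (b + 1)) ≤ tau T (Dtree a b) := by
  unfold tau
  refine csInf_le_csInf ⟨0, fun c hc => hc.1⟩ ?_ ?_
  · obtain ⟨c, hc⟩ := tau_set_nonempty T (Dtree a b)
    exact ⟨c, hc⟩
  · rintro c ⟨hc0, hc⟩
    exact ⟨hc0, tau_mem_step T a b ha c hc0 hc⟩

end Main2

theorem tau_shift_iter_le {X Y : Type*} [NormedAddCommGroup X] [NormedSpace ℝ X]
    [CompleteSpace X] [NormedAddCommGroup Y] [NormedSpace ℝ Y] [CompleteSpace Y]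
    (T : X →L[ℝ] Y) (m n : ℕ) (hm : 1 ≤ m) (hn : 1 ≤ n) :
    tau T (Dtree (m + 1) (m + n)) ≤ tau T (Dtree 1 n) := by
  have key : ∀ m' : ℕ, tau T (Dtree (m' + 1) (m' + n)) ≤ tau T (Dtree 1 n) := by
    intro m'
    induction m' with
    | zero => simp
    | succ p ih =>
      have step := tau_step T (p + 1) (p + n) (by omega)
      have e : p + 1 + n = p + n + 1 := by omega
      calc tau T (Dtree (p + 1 + 1) (p + 1 + n))
          = tau T (Dtree (p + 1 + 1) (p + n + 1)) := by rw [e]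
        _ ≤ tau T (Dtree (p + 1) (p + n)) := step
        _ ≤ tau T (Dtree 1 n) := ih
  exact key m
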